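/- Strengthened future-imposed inventory bounds: if a minimax-MDP admits a feasible policy π, then for every t ∈ {2,…,T} and every π-compatible partial trajectory (s₁, x₁, s₂, x₂, …, s_t, x_t) with s₁ the initial environment state and x₁ = 0, one has L_{⋆⇝t−1→[t]}(s_{t−1}) ≤ x_t ≤ R_{⋆⇝t−1→[t]}(s_{t−1}). -/
import Mathlib


/-- A minimax Markov Decision Process. -/
structure MinimaxMDP where
  /-- time horizon -/
  T : ℕ
  /-- ambient type of environment states -/
  State : Type
  /-- the ambient type of states is finite -/
  fintype_state : Fintype State
  /-- the set of environment states available at each time -/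
  S : ℕ → Set State
  /-- the initial environment state -/
  s1 : State
  /-- the environment state transition map -/
  F : ℕ → State → Set State
  /-- lower action bounds -/
  U : ℕ → State → ℝ
  /-- upper action bounds -/
  V : ℕ → State → ℝ
  /-- lower inventory bounds -/
  L : ℕ → State → ℝ
  /-- upper inventory bounds -/
  R : ℕ → State → ℝ

namespace MinimaxMDP

variable (M : MinimaxMDP)

/-- The structural hypotheses on a minimax-MDP. -/
def IsValid : Prop :=
  1 ≤ M.T ∧
  (∀ t, 1 ≤ t → t ≤ M.T → (M.S t).Nonempty) ∧
  M.s1 ∈ M.S 1 ∧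
  (∀ t s, 1 ≤ t → t + 1 ≤ M.T → s ∈ M.S t → (M.F t s).Nonempty ∧ M.F t s ⊆ M.S (t + 1)) ∧
  (∀ t s, 1 ≤ t → t + 1 ≤ M.T → s ∈ M.S t → M.U t s ≤ M.V t s) ∧
  M.L 1 M.s1 = 0 ∧ M.R 1 M.s1 = 0

/-- A compatible environment state trajectory on the time window `[α, β]`. -/
def EnvCompat (α β : ℕ) (s : ℕ → M.State) : Prop :=
  (∀ t, α ≤ t → t ≤ β → s t ∈ M.S t) ∧
  (∀ t, α ≤ t → t < β → s (t + 1) ∈ M.F t (s t))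

/-- `F_{α→β}(a)`: the set of endpoints of compatible environment trajectories starting at `a`. -/
def Reach (α β : ℕ) (a : M.State) : Set M.State :=
  {b | ∃ s : ℕ → M.State, M.EnvCompat α β s ∧ s α = a ∧ s β = b}

/-- `U_{α→β}(a, b)`: the maximal cumulative lower action bound along compatible trajectories. -/
noncomputable def Umax (α β : ℕ) (a b : M.State) : ℝ :=
  sSup {u | ∃ s : ℕ → M.State, M.EnvCompat α β s ∧ s α = a ∧ s β = b ∧
    u = ∑ t ∈ Finset.Ico α β, M.U t (s t)}

/-- `V_{α→β}(a, b)`: the minimal cumulative upper action bound along compatible trajectories. -/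
noncomputable def Vmin (α β : ℕ) (a b : M.State) : ℝ :=
  sInf {v | ∃ s : ℕ → M.State, M.EnvCompat α β s ∧ s α = a ∧ s β = b ∧
    v = ∑ t ∈ Finset.Ico α β, M.V t (s t)}

/-- `R_{β⇝α}(a)`. -/
noncomputable def Rto (β α : ℕ) (a : M.State) : ℝ :=
  sInf ((fun b => M.R β b - M.Umax α β a b) '' M.Reach α β a)

/-- `L_{β⇝α}(a)`. -/
noncomputable def Lto (β α : ℕ) (a : M.State) : ℝ :=
  sSup ((fun b => M.L β b - M.Vmin α β a b) '' M.Reach α β a)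

/-- `R_{⋆⇝α}(a)`. -/
noncomputable def Rstar (α : ℕ) (a : M.State) : ℝ :=
  sInf ((fun β => M.Rto β α a) '' Set.Icc α M.T)

/-- `L_{⋆⇝α}(a)`. -/
noncomputable def Lstar (α : ℕ) (a : M.State) : ℝ :=
  sSup ((fun β => M.Lto β α a) '' Set.Icc α M.T)

/-- `R_{⋆⇝α→[α+1]}(a)`. -/
noncomputable def RstarBr (α : ℕ) (a : M.State) : ℝ :=
  sInf ((fun b => M.Rstar (α + 1) b) '' M.F α a)

/-- `L_{⋆⇝α→[α+1]}(a)`. -/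
noncomputable def LstarBr (α : ℕ) (a : M.State) : ℝ :=
  sSup ((fun b => M.Lstar (α + 1) b) '' M.F α a)

/-- The future-imposed conditions. -/
def FutureImposed : Prop :=
  M.Lstar 1 M.s1 ≤ M.Rstar 1 M.s1 ∧
  ∀ α, 2 ≤ α → α ≤ M.T → ∀ a ∈ M.Reach 1 (α - 1) M.s1,
    M.LstarBr (α - 1) a ≤ M.RstarBr (α - 1) a

/-- A `π`-compatible partial trajectory on `[α, β]`. -/
def PiCompat (π : ℕ → M.State → ℝ → ℝ) (α β : ℕ) (s : ℕ → M.State) (x : ℕ → ℝ) : Prop :=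
  M.EnvCompat α β s ∧ ∀ t, α ≤ t → t < β → x (t + 1) = x t + π t (s t) (x t)

/-- A feasible partial trajectory on `[α, β]`. -/
def FeasibleTraj (α β : ℕ) (s : ℕ → M.State) (x : ℕ → ℝ) : Prop :=
  (∀ t, α ≤ t → t < β →
    M.U t (s t) ≤ x (t + 1) - x t ∧ x (t + 1) - x t ≤ M.V t (s t)) ∧
  (∀ t, α ≤ t → t ≤ β → M.L t (s t) ≤ x t ∧ x t ≤ M.R t (s t))

/-- A feasible policy: every `π`-compatible full trajectory is feasible. -/
def FeasiblePolicy (π : ℕ → M.State → ℝ → ℝ) : Prop :=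
  ∀ s x, M.PiCompat π 1 M.T s x → s 1 = M.s1 → x 1 = 0 → M.FeasibleTraj 1 M.T s x

end MinimaxMDP

/-! ### Auxiliary machinery -/

/-- Any valid state at a valid time can be extended to a compatible environment trajectory
reaching the horizon. (Auxiliary version, induction on the remaining time `k`.) -/
private lemma aux_ext_aux (M : MinimaxMDP) (hM : M.IsValid) :
    ∀ k β, β + k = M.T → 1 ≤ β → ∀ c ∈ M.S β,
      ∃ e : ℕ → M.State, e β = c ∧ M.EnvCompat β M.T e := by
  intro k
  induction k with
  | zero =>
    intro β hβ hβ1 c hc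
    refine ⟨fun _ => c, rfl, ?_, ?_⟩
    · intro u h1 h2
      have h : u = β := by omega
      show c ∈ M.S u
      rw [h]; exact hc
    · intro u h1 h2
      exfalso; omega
  | succ k ih =>
    intro β hβ hβ1 c hc
    have hF := hM.2.2.2.1 β c hβ1 (by omega) hc
    obtain ⟨c', hc'⟩ := hF.1
    have hc'S : c' ∈ M.S (β + 1) := hF.2 hc'
    obtain ⟨e', he'β, he'⟩ := ih (β + 1) (by omega) (by omega) c' hc'S
    refine ⟨fun u => if u ≤ β then c else e' u, by simp, ?_, ?_⟩
    · intro u h1 h2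
      by_cases h : u ≤ β
      · have huβ : u = β := by omega
        show (if u ≤ β then c else e' u) ∈ M.S u
        rw [if_pos h, huβ]; exact hc
      · show (if u ≤ β then c else e' u) ∈ M.S u
        rw [if_neg h]; exact he'.1 u (by omega) h2
    · intro u h1 h2
      by_cases h : u = β
      · show (if u + 1 ≤ β then c else e' (u + 1)) ∈ M.F u (if u ≤ β then c else e' u)
        rw [if_neg (by omega : ¬ u + 1 ≤ β), if_pos (by omega : u ≤ β), h, he'β]
        exact hc'
      · show (if u + 1 ≤ β then c else e' (u + 1)) ∈ M.F u (if u ≤ β then c else e' u)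
        rw [if_neg (by omega : ¬ u + 1 ≤ β), if_neg (by omega : ¬ u ≤ β)]
        exact he'.2 u (by omega) h2

/-- Any valid state at a valid time can be extended to a compatible environment trajectory
reaching the horizon. -/
private lemma aux_ext (M : MinimaxMDP) (hM : M.IsValid) (α : ℕ) (hα1 : 1 ≤ α) (hαT : α ≤ M.T)
    (c : M.State) (hc : c ∈ M.S α) :
    ∃ e : ℕ → M.State, e α = c ∧ M.EnvCompat α M.T e :=
  aux_ext_aux M hM (M.T - α) α (by omega) hα1 c hc

/-- The inventory trajectory generated by policy `π` along environment trajectory `sh`,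
indexed so that `trajX M π sh k` is the inventory at time `k + 1`. -/
private noncomputable def MinimaxMDP.trajX (M : MinimaxMDP) (π : ℕ → M.State → ℝ → ℝ)
    (sh : ℕ → M.State) : ℕ → ℝ
  | 0 => 0
  | k + 1 => M.trajX π sh k + π (k + 1) (sh (k + 1)) (M.trajX π sh k)

private lemma trajX_zero (M : MinimaxMDP) (π : ℕ → M.State → ℝ → ℝ) (sh : ℕ → M.State) :
    M.trajX π sh (1 - 1) = 0 := rfl

private lemma trajX_rec (M : MinimaxMDP) (π : ℕ → M.State → ℝ → ℝ) (sh : ℕ → M.State)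
    (u : ℕ) (hu : 1 ≤ u) :
    M.trajX π sh (u + 1 - 1) = M.trajX π sh (u - 1) + π u (sh u) (M.trajX π sh (u - 1)) := by
  rw [show u + 1 - 1 = (u - 1) + 1 by omega]
  rw [show M.trajX π sh ((u - 1) + 1)
      = M.trajX π sh (u - 1) + π ((u - 1) + 1) (sh ((u - 1) + 1)) (M.trajX π sh (u - 1)) from rfl]
  rw [show u - 1 + 1 = u by omega]

/-- Abstract form of the stitching construction: from the prefix `(s, x)` on `[1, t]`, a
hypothetical continuation `s'` on `[t, β]` and an extension `e` on `[β, T]`, any `sh`, `xh`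
agreeing appropriately with these pieces form a full `π`-compatible trajectory. -/
private lemma aux_abstract (M : MinimaxMDP) (hM : M.IsValid) (π : ℕ → M.State → ℝ → ℝ)
    (t : ℕ) (ht1 : 2 ≤ t) (htT : t ≤ M.T)
    (s : ℕ → M.State) (x : ℕ → ℝ)
    (hcompat : M.PiCompat π 1 t s x) (hs1 : s 1 = M.s1) (hx1 : x 1 = 0)
    (β : ℕ) (hβ1 : t ≤ β) (hβT : β ≤ M.T)
    (s' : ℕ → M.State) (hs' : M.EnvCompat t β s') (hb : s' t ∈ M.F (t - 1) (s (t - 1)))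
    (e : ℕ → M.State) (heβ : e β = s' β) (he : M.EnvCompat β M.T e)
    (sh : ℕ → M.State)
    (hlo : ∀ u, u ≤ t - 1 → sh u = s u)
    (hmid : ∀ u, t - 1 < u → u ≤ β → sh u = s' u)
    (hhi : ∀ u, β < u → sh u = e u)
    (xh : ℕ → ℝ) (hxh1 : xh 1 = 0)
    (hxhrec : ∀ u, 1 ≤ u → xh (u + 1) = xh u + π u (sh u) (xh u)) :
    M.PiCompat π 1 M.T sh xh ∧ sh 1 = M.s1 ∧ xh 1 = 0 ∧ xh t = x t ∧
      ∀ u, t ≤ u → u ≤ β → sh u = s' u := by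
  have hmid' : ∀ u, t ≤ u → u ≤ β → sh u = s' u := fun u h1 h2 => hmid u (by omega) h2
  have henv : M.EnvCompat 1 M.T sh := by
    constructor
    · intro u h1 h2
      rcases le_or_gt u (t - 1) with h | h
      · rw [hlo u h]; exact hcompat.1.1 u h1 (by omega)
      · rcases le_or_gt u β with h' | h'
        · rw [hmid u h h']; exact hs'.1 u (by omega) h'
        · rw [hhi u h']; exact he.1 u (by omega) h2
    · intro u h1 h2
      rcases lt_trichotomy u (t - 1) with h | h | h
      · rw [hlo u (by omega), hlo (u + 1) (by omega)]
        exact hcompat.1.2 u h1 (by omega)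
      · rw [hlo u (by omega), hmid (u + 1) (by omega) (by omega), show u + 1 = t by omega, h]
        exact hb
      · rcases lt_or_ge u β with h' | h'
        · rw [hmid u h (by omega), hmid (u + 1) (by omega) (by omega)]
          exact hs'.2 u (by omega) h'
        · have h4 : sh u = e u := by
            rcases eq_or_lt_of_le h' with h5 | h5
            · rw [hmid u h (by omega), ← h5]
              exact heβ.symm
            · exact hhi u h5
          rw [h4, hhi (u + 1) (by omega)]
          exact he.2 u (by omega) h2
  have hPC : M.PiCompat π 1 M.T sh xh := ⟨henv, fun u h1 _ => hxhrec u h1⟩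
  have hsh1 : sh 1 = M.s1 := by rw [hlo 1 (by omega)]; exact hs1
  have hxt : xh t = x t := by
    have key : ∀ u, 1 ≤ u → u ≤ t → xh u = x u := by
      intro u hu
      induction u, hu using Nat.le_induction with
      | base => intro _; rw [hxh1, hx1]
      | succ u hu ih =>
        intro h
        rw [hxhrec u hu, hcompat.2 u hu (by omega), ih (by omega), hlo u (by omega)]
    exact key t (by omega) le_rfl
  exact ⟨hPC, hsh1, hxh1, hxt, hmid'⟩

/-- The stitching construction: a full `π`-compatible trajectory extending the prefix and
following `s'` on `[t, β]`. -/
private lemma aux_construct (M : MinimaxMDP) (hM : M.IsValid) (π : ℕ → M.State → ℝ → ℝ)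
    (t : ℕ) (ht1 : 2 ≤ t) (htT : t ≤ M.T)
    (s : ℕ → M.State) (x : ℕ → ℝ)
    (hcompat : M.PiCompat π 1 t s x) (hs1 : s 1 = M.s1) (hx1 : x 1 = 0)
    (β : ℕ) (hβ1 : t ≤ β) (hβT : β ≤ M.T)
    (s' : ℕ → M.State) (hs' : M.EnvCompat t β s') (hb : s' t ∈ M.F (t - 1) (s (t - 1))) :
    ∃ (sh : ℕ → M.State) (xh : ℕ → ℝ),
      M.PiCompat π 1 M.T sh xh ∧ sh 1 = M.s1 ∧ xh 1 = 0 ∧ xh t = x t ∧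
      ∀ u, t ≤ u → u ≤ β → sh u = s' u := by
  obtain ⟨e, heβ, he⟩ := aux_ext M hM β (by omega) hβT (s' β) (hs'.1 β hβ1 le_rfl)
  exact ⟨fun u => if u ≤ t - 1 then s u else if u ≤ β then s' u else e u,
    fun u => M.trajX π (fun v => if v ≤ t - 1 then s v else if v ≤ β then s' v else e v) (u - 1),
    aux_abstract M hM π t ht1 htT s x hcompat hs1 hx1 β hβ1 hβT s' hs' hb e heβ he
      (fun u => if u ≤ t - 1 then s u else if u ≤ β then s' u else e u)
      (fun u h => by
        show (if u ≤ t - 1 then s u else if u ≤ β then s' u else e u) = s u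
        rw [if_pos h])
      (fun u h1 h2 => by
        show (if u ≤ t - 1 then s u else if u ≤ β then s' u else e u) = s' u
        rw [if_neg (by omega : ¬ u ≤ t - 1), if_pos h2])
      (fun u h => by
        show (if u ≤ t - 1 then s u else if u ≤ β then s' u else e u) = e u
        rw [if_neg (by omega : ¬ u ≤ t - 1), if_neg (by omega : ¬ u ≤ β)])
      (fun u => M.trajX π (fun v => if v ≤ t - 1 then s v else if v ≤ β then s' v else e v) (u - 1))
      (trajX_zero M π _)
      (fun u hu => trajX_rec M π _ u hu)⟩

/-- Core estimate: along any hypothetical continuation `s'` on `[t, β]` branching at time `t`,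
the inventory `x t` is sandwiched by the inventory bounds at time `β` minus/plus cumulative
action bounds. -/
private lemma aux_core (M : MinimaxMDP) (hM : M.IsValid) (π : ℕ → M.State → ℝ → ℝ)
    (hπ : M.FeasiblePolicy π)
    (t : ℕ) (ht1 : 2 ≤ t) (htT : t ≤ M.T)
    (s : ℕ → M.State) (x : ℕ → ℝ)
    (hcompat : M.PiCompat π 1 t s x) (hs1 : s 1 = M.s1) (hx1 : x 1 = 0)
    (β : ℕ) (hβ1 : t ≤ β) (hβT : β ≤ M.T)
    (s' : ℕ → M.State) (hs' : M.EnvCompat t β s') (hb : s' t ∈ M.F (t - 1) (s (t - 1))) :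
    M.L β (s' β) ≤ x t + ∑ u ∈ Finset.Ico t β, M.V u (s' u) ∧
    x t + ∑ u ∈ Finset.Ico t β, M.U u (s' u) ≤ M.R β (s' β) := by
  obtain ⟨sh, xh, hPC, hsh1, hxh1, hxt, hmid⟩ :=
    aux_construct M hM π t ht1 htT s x hcompat hs1 hx1 β hβ1 hβT s' hs' hb
  have hfeas := hπ sh xh hPC hsh1 hxh1
  have key : ∀ v, t ≤ v → v ≤ β →
      xh v ≤ xh t + ∑ u ∈ Finset.Ico t v, M.V u (sh u) ∧
      xh t + ∑ u ∈ Finset.Ico t v, M.U u (sh u) ≤ xh v := by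
    intro v hv
    induction v, hv using Nat.le_induction with
    | base => intro _; simp
    | succ v hv ih =>
      intro hvβ
      obtain ⟨ih1, ih2⟩ := ih (by omega)
      have hstep := hfeas.1 v (by omega) (by omega)
      rw [Finset.sum_Ico_succ_top hv, Finset.sum_Ico_succ_top hv]
      constructor <;> linarith [hstep.1, hstep.2]
  obtain ⟨k1, k2⟩ := key β hβ1 le_rfl
  have hLR := hfeas.2 β (by omega) hβT
  have hshβ : sh β = s' β := hmid β hβ1 le_rfl
  have hsumV : ∑ u ∈ Finset.Ico t β, M.V u (sh u) = ∑ u ∈ Finset.Ico t β, M.V u (s' u) :=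
    Finset.sum_congr rfl fun u hu => by
      obtain ⟨h1, h2⟩ := Finset.mem_Ico.mp hu
      rw [hmid u h1 (le_of_lt h2)]
  have hsumU : ∑ u ∈ Finset.Ico t β, M.U u (sh u) = ∑ u ∈ Finset.Ico t β, M.U u (s' u) :=
    Finset.sum_congr rfl fun u hu => by
      obtain ⟨h1, h2⟩ := Finset.mem_Ico.mp hu
      rw [hmid u h1 (le_of_lt h2)]
  rw [hshβ] at hLR
  rw [hsumV, hxt] at k1
  rw [hsumU, hxt] at k2
  exact ⟨le_trans hLR.1 k1, le_trans k2 hLR.2⟩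

/-- **Lemma (Strengthened future-imposed inventory bounds).** If a minimax-MDP admits a feasible
policy `π`, then for every `t ∈ {2,…,T}` and every `π`-compatible partial trajectory
`(s₁, x₁, …, s_t, x_t)` with `s₁` the initial environment state and `x₁ = 0`, one has
`L_{⋆⇝t−1→[t]}(s_{t−1}) ≤ x_t ≤ R_{⋆⇝t−1→[t]}(s_{t−1})`. -/
theorem strengthened_futureImposed_inventory_bounds (M : MinimaxMDP) (hM : M.IsValid)
    (π : ℕ → M.State → ℝ → ℝ) (hπ : M.FeasiblePolicy π)
    (t : ℕ) (ht1 : 2 ≤ t) (htT : t ≤ M.T)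
    (s : ℕ → M.State) (x : ℕ → ℝ)
    (hcompat : M.PiCompat π 1 t s x) (hs1 : s 1 = M.s1) (hx1 : x 1 = 0) :
    M.LstarBr (t - 1) (s (t - 1)) ≤ x t ∧ x t ≤ M.RstarBr (t - 1) (s (t - 1)) := by
  have ht' : t - 1 + 1 = t := by omega
  have hSt1 : s (t - 1) ∈ M.S (t - 1) := hcompat.1.1 (t - 1) (by omega) (by omega)
  have hF := hM.2.2.2.1 (t - 1) (s (t - 1)) (by omega) (by omega) hSt1
  have hbS : ∀ b ∈ M.F (t - 1) (s (t - 1)), b ∈ M.S t := by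
    intro b hb
    have := hF.2 hb
    rwa [ht'] at this
  have hReach : ∀ b ∈ M.F (t - 1) (s (t - 1)), ∀ γ, t ≤ γ → γ ≤ M.T →
      (M.Reach t γ b).Nonempty := by
    intro b hb γ h1 h2
    obtain ⟨e, het, he⟩ := aux_ext M hM t (by omega) htT b (hbS b hb)
    exact ⟨e γ, e, ⟨fun u hu1 hu2 => he.1 u hu1 (by omega),
      fun u hu1 hu2 => he.2 u hu1 (by omega)⟩, het, rfl⟩
  constructor
  · unfold MinimaxMDP.LstarBr
    rw [ht']
    apply csSup_le (hF.1.image _)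
    rintro r ⟨b, hb, rfl⟩
    show M.Lstar t b ≤ x t
    unfold MinimaxMDP.Lstar
    apply csSup_le (Set.Nonempty.image _ ⟨t, Set.mem_Icc.mpr ⟨le_rfl, htT⟩⟩)
    rintro r ⟨γ, hγ, rfl⟩
    show M.Lto γ t b ≤ x t
    unfold MinimaxMDP.Lto
    apply csSup_le (Set.Nonempty.image _ (hReach b hb γ hγ.1 hγ.2))
    rintro r ⟨c, hc, rfl⟩
    show M.L γ c - M.Vmin t γ b c ≤ x t
    obtain ⟨s'', hs'', hbt, hcγ⟩ := hc
    have hVmin : M.L γ c - x t ≤ M.Vmin t γ b c := by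
      unfold MinimaxMDP.Vmin
      refine le_csInf ⟨_, s'', hs'', hbt, hcγ, rfl⟩ ?_
      rintro v ⟨sc, hsc, hsct, hscγ, rfl⟩
      have := (aux_core M hM π hπ t ht1 htT s x hcompat hs1 hx1 γ hγ.1 hγ.2 sc hsc
        (by rw [hsct]; exact hb)).1
      rw [hscγ] at this
      linarith
    linarith
  · unfold MinimaxMDP.RstarBr
    rw [ht']
    apply le_csInf (hF.1.image _)
    rintro r ⟨b, hb, rfl⟩
    show x t ≤ M.Rstar t b
    unfold MinimaxMDP.Rstar
    apply le_csInf (Set.Nonempty.image _ ⟨t, Set.mem_Icc.mpr ⟨le_rfl, htT⟩⟩)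
    rintro r ⟨γ, hγ, rfl⟩
    show x t ≤ M.Rto γ t b
    unfold MinimaxMDP.Rto
    apply le_csInf (Set.Nonempty.image _ (hReach b hb γ hγ.1 hγ.2))
    rintro r ⟨c, hc, rfl⟩
    show x t ≤ M.R γ c - M.Umax t γ b c
    obtain ⟨s'', hs'', hbt, hcγ⟩ := hc
    have hUmax : M.Umax t γ b c ≤ M.R γ c - x t := by
      unfold MinimaxMDP.Umax
      refine csSup_le ⟨_, s'', hs'', hbt, hcγ, rfl⟩ ?_
      rintro v ⟨sc, hsc, hsct, hscγ, rfl⟩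
      have := (aux_core M hM π hπ t ht1 htT s x hcompat hs1 hx1 γ hγ.1 hγ.2 sc hsc
        (by rw [hsct]; exact hb)).2
      rw [hscγ] at this
      linarith
    linarith
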